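/- Let P be a two-orbit n-polytope in class 2_I with base flag Φ, and for i ∈ I let ρ_i ∈ Γ(P) be the unique automorphism with Φρ_i = Φ^i, for j,k ∉ I let α_{j,k} be the unique automorphism with Φα_{j,k} = Φ^{j,k}, and for i ∈ I, j ∉ I let α_{j,i,j} be the unique automorphism with Φα_{j,i,j} = Φ^{j,i,j}. Then Γ(P) is generated by the set G_I = {ρ_i : i ∈ I} ∪ {α_{j,k} : j,k ∉ I} ∪ {α_{j,i,j} : i ∈ I, j ∉ I}. -/

import Mathlib

/-- An abstract polytope of rank `n`, presented by a partially ordered type of faces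
with a strictly monotone rank function onto `{-1, 0, ..., n}`, such that every flag
(maximal chain) has exactly one face of each rank (`faceAt`), every flag has a unique
`i`-adjacent flag for each `i = 0, ..., n-1` (the diamond condition, via `adj`), and
which is strongly flag-connected. -/
structure AbstractPolytope (n : ℕ) (Face : Type*) [PartialOrder Face] where
  rank : Face → ℤ
  rank_strictMono : ∀ {F G : Face}, F < G → rank F < rank G
  rank_le : ∀ F : Face, -1 ≤ rank F ∧ rank F ≤ (n : ℤ)
  /-- the unique face of rank `i` in the flag `Φ`, for `-1 ≤ i ≤ n` -/
  faceAt : Flag Face → ℤ → Face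
  faceAt_mem : ∀ (Φ : Flag Face) (i : ℤ), -1 ≤ i → i ≤ (n : ℤ) → faceAt Φ i ∈ Φ
  faceAt_rank : ∀ (Φ : Flag Face) (i : ℤ), -1 ≤ i → i ≤ (n : ℤ) → rank (faceAt Φ i) = i
  faceAt_eq : ∀ (Φ : Flag Face) (F : Face), F ∈ Φ → faceAt Φ (rank F) = F
  /-- the unique `i`-adjacent flag of `Φ`, for `0 ≤ i ≤ n-1` -/
  adj : Flag Face → ℕ → Flag Face
  adj_ne : ∀ (Φ : Flag Face) (i : ℕ), i < n → adj Φ i ≠ Φ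
  adj_mem : ∀ (Φ : Flag Face) (i : ℕ), i < n →
    ∀ F ∈ Φ, rank F ≠ (i : ℤ) → F ∈ adj Φ i
  adj_unique : ∀ (Φ Ψ : Flag Face) (i : ℕ), i < n → Ψ ≠ Φ →
    (∀ F ∈ Φ, rank F ≠ (i : ℤ) → F ∈ Ψ) → Ψ = adj Φ i
  /-- strong flag-connectedness: any two flags are joined by a sequence of successively
  adjacent flags, with all adjacencies at ranks not occurring among their common faces -/
  connected : ∀ Φ Ψ : Flag Face, ∃ (l : ℕ) (c : ℕ → Flag Face), c 0 = Φ ∧ c l = Ψ ∧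
    ∀ m < l, ∃ i : ℕ, i < n ∧ c (m + 1) = adj (c m) i ∧
      ∀ F : Face, F ∈ Φ → F ∈ Ψ → rank F ≠ (i : ℤ)

namespace AbstractPolytope

variable {n : ℕ} {Face : Type*} [PartialOrder Face]

/-- The automorphism group `Γ(P)`: order automorphisms of the set of faces.
It acts on flags via `Flag.map`; `g • Φ` denotes the image flag. -/
instance : MulAction (Face ≃o Face) (Flag Face) where
  smul g Φ := Flag.map g Φ
  one_smul Φ := by
    show Flag.map 1 Φ = Φ
    ext x
    simp [Flag.map, Flag.ofIsMaxChain]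
  mul_smul g h Φ := by
    show Flag.map (g * h) Φ = Flag.map g (Flag.map h Φ)
    ext x
    simp [Flag.map, Flag.ofIsMaxChain, Set.image_image]

lemma smul_flag_def (g : Face ≃o Face) (Φ : Flag Face) : g • Φ = Flag.map g Φ := rfl

/-- Two flags lie in the same orbit under the automorphism group. -/
def SameOrbit (Φ Ψ : Flag Face) : Prop := ∃ g : Face ≃o Face, g • Φ = Ψ

/-- The polytope has exactly two orbits on flags. -/
def TwoOrbit (_A : AbstractPolytope n Face) : Prop :=
  ∃ Φ Ψ : Flag Face, ¬ SameOrbit Φ Ψ ∧ ∀ X : Flag Face, SameOrbit X Φ ∨ SameOrbit X Ψ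

/-- `I` is the class type set of the two-orbit polytope `A`: it consists precisely of
those ranks `i ∈ {0,...,n-1}` such that every flag and its `i`-adjacent flag lie in the
same orbit; that is, `A` is in the class `2_I`. -/
def InClass (A : AbstractPolytope n Face) (I : Set ℕ) : Prop :=
  (∀ i ∈ I, i < n) ∧ ∀ i : ℕ, i < n → (i ∈ I ↔ ∀ Φ : Flag Face, SameOrbit Φ (A.adj Φ i))

/-- The stabilizer in the automorphism group of a face `F`. -/
def faceStab (_A : AbstractPolytope n Face) (F : Face) : Subgroup (Face ≃o Face) where
  carrier := {g : Face ≃o Face | g F = F}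
  one_mem' := rfl
  mul_mem' := by
    intro a b ha hb
    show (a * b) F = F
    rw [RelIso.mul_apply]
    rw [show b F = F from hb, show a F = F from ha]
  inv_mem' := by
    intro a ha
    show a⁻¹ F = F
    conv_lhs => rw [← show a F = F from ha]
    exact a.symm_apply_apply F

lemma mem_faceStab {A : AbstractPolytope n Face} {F : Face} {g : Face ≃o Face} :
    g ∈ A.faceStab F ↔ g F = F := Iff.rfl

end AbstractPolytope

/-!
Automorphisms preserve ranks, hence commute with adjacency, and by strong flag-connectedness
they act freely on flags. Since the polytope is not flag-transitive, some `j < n` lies outside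
`I`, and then no flag is in the orbit of its `j`-adjacent flag. Let `H` be the group generated
by `G_I`. The generators are chosen so that `Φ^i` and `Φ^{j,i}` lie in `H • {Φ, Φ^j}` for every
`i`; this set is therefore closed under all adjacencies and contains every flag. For an
automorphism `g`, the flag `g • Φ` cannot lie in `H • Φ^j`, so `g • Φ = h • Φ` with `h ∈ H`,
and `g = h`.
-/

open scoped Pointwise

namespace AbstractPolytope

variable {n : ℕ} {Face : Type*} [PartialOrder Face]

lemma mem_smul_flag_iff {g : Face ≃o Face} {Φ : Flag Face} {F : Face} :
    F ∈ g • Φ ↔ ∃ F' ∈ Φ, g F' = F := by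
  rw [smul_flag_def, ← Flag.mem_coe_iff, Flag.coe_map]
  exact Set.mem_image _ _ _

lemma apply_mem_smul_flag {g : Face ≃o Face} {Φ : Flag Face} {F : Face} (hF : F ∈ Φ) :
    g F ∈ g • Φ :=
  mem_smul_flag_iff.2 ⟨F, hF, rfl⟩

lemma SameOrbit.refl (Φ : Flag Face) : SameOrbit Φ Φ := ⟨1, one_smul _ _⟩

lemma SameOrbit.symm {Φ Ψ : Flag Face} (h : SameOrbit Φ Ψ) : SameOrbit Ψ Φ := by
  obtain ⟨g, rfl⟩ := h
  exact ⟨g⁻¹, inv_smul_smul g Φ⟩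

lemma SameOrbit.trans {Φ Ψ X : Flag Face} (h : SameOrbit Φ Ψ) (h' : SameOrbit Ψ X) :
    SameOrbit Φ X := by
  obtain ⟨g, rfl⟩ := h
  obtain ⟨k, rfl⟩ := h'
  exact ⟨k * g, mul_smul k g Φ⟩

section Geometry

variable (A : AbstractPolytope n Face)

lemma eq_of_mem_of_rank_eq {Ψ : Flag Face} {F G : Face} (hF : F ∈ Ψ) (hG : G ∈ Ψ)
    (h : A.rank F = A.rank G) : F = G := by
  rw [← A.faceAt_eq Ψ F hF, h, A.faceAt_eq Ψ G hG]

lemma faceAt_lt (Φ : Flag Face) {r r' : ℤ} (hr : -1 ≤ r) (hrr' : r < r') (hr' : r' ≤ n) :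
    A.faceAt Φ r < A.faceAt Φ r' := by
  have hrank := A.faceAt_rank Φ r hr (by omega)
  have hrank' := A.faceAt_rank Φ r' (by omega) hr'
  have hne : A.faceAt Φ r ≠ A.faceAt Φ r' := fun h => by
    rw [h, hrank'] at hrank
    omega
  rcases Φ.le_or_le (A.faceAt_mem Φ r hr (by omega)) (A.faceAt_mem Φ r' (by omega) hr')
    with hle | hle
  · exact hle.lt_of_ne hne
  · have := A.rank_strictMono (hle.lt_of_ne hne.symm)
    omega

lemma le_rank_apply_faceAt (g : Face ≃o Face) (Φ : Flag Face) {r : ℤ} (hr : -1 ≤ r)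
    (hrn : r ≤ n) : r ≤ A.rank (g (A.faceAt Φ r)) := by
  induction r, hr using Int.leInduction with
  | base => exact (A.rank_le _).1
  | succ r hr ih =>
    have := A.rank_strictMono (g.strictMono (A.faceAt_lt Φ hr (lt_add_one r) hrn))
    have := ih (by omega)
    omega

lemma rank_apply_faceAt (g : Face ≃o Face) (Φ : Flag Face) {r : ℤ} (hr : -1 ≤ r)
    (hrn : r ≤ n) : A.rank (g (A.faceAt Φ r)) = r := by
  set F := g (A.faceAt Φ r)
  have hF : F ∈ g • Φ := apply_mem_smul_flag (A.faceAt_mem Φ r hr hrn)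
  have h := A.le_rank_apply_faceAt g.symm (g • Φ) (A.rank_le F).1 (A.rank_le F).2
  rw [A.faceAt_eq _ F hF, g.symm_apply_apply, A.faceAt_rank Φ r hr hrn] at h
  exact le_antisymm h (A.le_rank_apply_faceAt g Φ hr hrn)

lemma rank_apply (g : Face ≃o Face) (F : Face) : A.rank (g F) = A.rank F := by
  obtain ⟨Φ, hF⟩ := Flag.exists_mem F
  conv_lhs => rw [← A.faceAt_eq Φ F hF]
  exact A.rank_apply_faceAt g Φ (A.rank_le F).1 (A.rank_le F).2

lemma smul_adj (g : Face ≃o Face) (Φ : Flag Face) {i : ℕ} (hi : i < n) :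
    g • A.adj Φ i = A.adj (g • Φ) i := by
  refine A.adj_unique (g • Φ) (g • A.adj Φ i) i hi
    (fun h => A.adj_ne Φ i hi (smul_left_cancel g h)) fun F hF hFi => ?_
  obtain ⟨F', hF', rfl⟩ := mem_smul_flag_iff.1 hF
  rw [A.rank_apply] at hFi
  exact apply_mem_smul_flag (A.adj_mem Φ i hi F' hF' hFi)

lemma adj_adj (Φ : Flag Face) {i : ℕ} (hi : i < n) : A.adj (A.adj Φ i) i = Φ := by
  refine (A.adj_unique _ Φ i hi (A.adj_ne Φ i hi).symm fun F hF hFi => ?_).symm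
  have hG := A.faceAt_mem Φ _ (A.rank_le F).1 (A.rank_le F).2
  have hGr := A.faceAt_rank Φ _ (A.rank_le F).1 (A.rank_le F).2
  have hGadj := A.adj_mem Φ i hi _ hG (by rwa [hGr])
  rw [A.eq_of_mem_of_rank_eq hF hGadj hGr.symm]
  exact hG

lemma eq_smul_adj_of_smul_eq_adj {g : Face ≃o Face} {Φ Ψ : Flag Face} {j : ℕ} (hj : j < n)
    (hg : g • Φ = A.adj Ψ j) : Ψ = g • A.adj Φ j := by
  rw [A.smul_adj g Φ hj, hg, A.adj_adj Ψ hj]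

lemma adj_induction {p : Flag Face → Prop} {Φ : Flag Face} (hΦ : p Φ)
    (hadj : ∀ Ψ, ∀ i < n, p Ψ → p (A.adj Ψ i)) (Ψ : Flag Face) : p Ψ := by
  obtain ⟨l, c, rfl, rfl, hc⟩ := A.connected Φ Ψ
  suffices ∀ m ≤ l, p (c m) from this l le_rfl
  intro m hm
  induction m with
  | zero => exact hΦ
  | succ m ih =>
    obtain ⟨i, hi, hcm, -⟩ := hc m hm
    rw [hcm]
    exact hadj _ i hi (ih (by omega))

lemma smul_eq_univ_of_adj_mem (H : Subgroup (Face ≃o Face)) {B : Set (Flag Face)}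
    (hB : B.Nonempty)
    (hadj : ∀ Ψ ∈ B, ∀ i < n, A.adj Ψ i ∈ (H : Set (Face ≃o Face)) • B) :
    (H : Set (Face ≃o Face)) • B = Set.univ := by
  obtain ⟨Ψ₀, hΨ₀⟩ := hB
  refine Set.eq_univ_of_forall (A.adj_induction ⟨1, H.one_mem, Ψ₀, hΨ₀, one_smul _ _⟩ ?_)
  intro _ i hi hmem
  obtain ⟨h, hh, Ψ, hΨ, rfl⟩ := Set.mem_smul.1 hmem
  obtain ⟨h', hh', Ψ', hΨ', he⟩ := Set.mem_smul.1 (hadj Ψ hΨ i hi)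
  refine Set.mem_smul.2 ⟨h * h', H.mul_mem hh hh', Ψ', hΨ', ?_⟩
  rw [mul_smul, he, A.smul_adj h Ψ hi]

end Geometry

lemma eq_one_of_smul_eq (A : AbstractPolytope n Face) {g : Face ≃o Face} {Φ : Flag Face}
    (hg : g • Φ = Φ) : g = 1 := by
  have hfix : ∀ Ψ : Flag Face, g • Ψ = Ψ :=
    A.adj_induction hg fun Ψ i hi hΨ => by rw [A.smul_adj g Ψ hi, hΨ]
  refine DFunLike.ext _ _ fun F => ?_
  obtain ⟨Ψ, hF⟩ := Flag.exists_mem F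
  exact A.eq_of_mem_of_rank_eq (hfix Ψ ▸ apply_mem_smul_flag hF) hF (A.rank_apply g F)

lemma eq_of_smul_eq_smul (A : AbstractPolytope n Face) {g h : Face ≃o Face} {Φ : Flag Face}
    (hgh : g • Φ = h • Φ) : g = h :=
  (inv_mul_eq_one.1 (A.eq_one_of_smul_eq (by rw [mul_smul, hgh, inv_smul_smul]))).symm

variable {A : AbstractPolytope n Face}

lemma TwoOrbit.sameOrbit_or (h2 : A.TwoOrbit) {a b : Flag Face} (hab : ¬ SameOrbit a b)
    (c : Flag Face) : SameOrbit c a ∨ SameOrbit c b := by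
  obtain ⟨Φ, Ψ, -, hall⟩ := h2
  rcases hall a with ha | ha <;> rcases hall b with hb | hb <;> rcases hall c with hc | hc <;>
    first
    | exact absurd (ha.trans hb.symm) hab
    | exact .inl (hc.trans ha.symm)
    | exact .inr (hc.trans hb.symm)

lemma TwoOrbit.sameOrbit_adj (h2 : A.TwoOrbit) {j : ℕ} (hj : j < n) {Ψ : Flag Face}
    (hΨ : SameOrbit Ψ (A.adj Ψ j)) (X : Flag Face) : SameOrbit X (A.adj X j) := by
  have hconj : ∀ X, SameOrbit Ψ X → SameOrbit X (A.adj X j) := by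
    rintro _ ⟨g, rfl⟩
    obtain ⟨k, hk⟩ := hΨ
    exact ⟨g * k * g⁻¹, by rw [mul_smul, mul_smul, inv_smul_smul, hk, A.smul_adj g Ψ hj]⟩
  by_cases hX : SameOrbit Ψ X
  · exact hconj X hX
  · rcases h2.sameOrbit_or (fun h => hX h.symm) (A.adj X j) with h | h
    · exact h.symm
    · simpa only [A.adj_adj X hj] using (hconj _ h.symm).symm

lemma InClass.mem_of_sameOrbit_adj {I : Set ℕ} (hI : A.InClass I) (h2 : A.TwoOrbit) {j : ℕ}
    (hj : j < n) {Ψ : Flag Face} (hΨ : SameOrbit Ψ (A.adj Ψ j)) : j ∈ I :=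
  (hI.2 j hj).2 (h2.sameOrbit_adj hj hΨ)

lemma InClass.exists_not_mem {I : Set ℕ} (hI : A.InClass I) (h2 : A.TwoOrbit) :
    ∃ j < n, j ∉ I := by
  by_contra! hall
  obtain ⟨Φ, Ψ, hΦΨ, -⟩ := h2
  exact hΦΨ (A.adj_induction (SameOrbit.refl Φ)
    (fun X i hi hX => hX.trans ((hI.2 i hi).1 (hall i hi) X)) Ψ)

lemma InClass.eq_top_of_smul_eq_univ {I : Set ℕ} (hI : A.InClass I) (h2 : A.TwoOrbit)
    {H : Subgroup (Face ≃o Face)} {Φ : Flag Face} {j : ℕ} (hj : j < n) (hjI : j ∉ I)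
    (hH : (H : Set (Face ≃o Face)) • {Φ, A.adj Φ j} = Set.univ) : H = ⊤ := by
  refine eq_top_iff.2 fun g _ => ?_
  obtain ⟨h, hh, Ψ, rfl | rfl, hgh⟩ := Set.mem_smul.1 (hH ▸ Set.mem_univ (g • Φ))
  · rwa [A.eq_of_smul_eq_smul hgh] at hh
  · refine absurd (hI.mem_of_sameOrbit_adj h2 hj (Ψ := Φ) ⟨h⁻¹ * g, ?_⟩) hjI
    rw [mul_smul, ← hgh, inv_smul_smul]

end AbstractPolytope

open AbstractPolytope in
/-- The distinguished generators `ρ_i` (`i ∈ I`), `α_{j,k}` (`j,k ∉ I`) and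
`α_{j,i,j} = β j i` (`i ∈ I`, `j ∉ I`), determined by their action on the base flag `Φ`,
generate the full automorphism group `Γ(P)`. -/
theorem stmt7 {n : ℕ} {Face : Type*} [PartialOrder Face] (A : AbstractPolytope n Face)
    (I : Set ℕ) (h2 : A.TwoOrbit) (hI : A.InClass I)
    (Φ : Flag Face)
    (ρ : ℕ → (Face ≃o Face)) (α : ℕ → ℕ → (Face ≃o Face)) (β : ℕ → ℕ → (Face ≃o Face))
    (hρ : ∀ i ∈ I, (ρ i) • Φ = A.adj Φ i)
    (hα : ∀ j k : ℕ, j < n → k < n → j ∉ I → k ∉ I →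
        (α j k) • Φ = A.adj (A.adj Φ j) k)
    (hβ : ∀ j : ℕ, ∀ i ∈ I, j < n → j ∉ I →
        (β j i) • Φ = A.adj (A.adj (A.adj Φ j) i) j) :
    Subgroup.closure
      ({x : Face ≃o Face | ∃ i ∈ I, x = ρ i}
        ∪ {x : Face ≃o Face | ∃ j k : ℕ, j < n ∧ k < n ∧ j ∉ I ∧ k ∉ I ∧ x = α j k}
        ∪ {x : Face ≃o Face | ∃ j : ℕ, ∃ i ∈ I, j < n ∧ j ∉ I ∧ x = β j i}) = ⊤ := by
  obtain ⟨j, hj, hjI⟩ := hI.exists_not_mem h2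
  refine hI.eq_top_of_smul_eq_univ h2 hj hjI
    (A.smul_eq_univ_of_adj_mem _ (Set.insert_nonempty Φ _) fun Ψ hΨ i hi => ?_)
  obtain hΨ | hΨ : Ψ = Φ ∨ Ψ = A.adj Φ j := hΨ <;> rw [hΨ] <;> by_cases hiI : i ∈ I
  · exact ⟨ρ i, Subgroup.subset_closure (.inl (.inl ⟨i, hiI, rfl⟩)), Φ, .inl rfl, hρ i hiI⟩
  · exact ⟨α i j, Subgroup.subset_closure (.inl (.inr ⟨i, j, hi, hj, hiI, hjI, rfl⟩)),
      A.adj Φ j, .inr rfl, (A.eq_smul_adj_of_smul_eq_adj hj (hα i j hi hj hiI hjI)).symm⟩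
  · exact ⟨β j i, Subgroup.subset_closure (.inr ⟨j, i, hiI, hj, hjI, rfl⟩),
      A.adj Φ j, .inr rfl, (A.eq_smul_adj_of_smul_eq_adj hj (hβ j i hiI hj hjI)).symm⟩
  · exact ⟨α j i, Subgroup.subset_closure (.inl (.inr ⟨j, i, hj, hi, hjI, hiI, rfl⟩)),
      Φ, .inl rfl, hα j i hj hi hjI hiI⟩
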